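/- arXiv:2405.08975 — 2 statements merged into one kernel-verified Lean document; each statement's English description precedes it below -/
import Mathlib

section
/- Fix $n \in \mathbb{N}$, $R \in (0,1)$, and define $\gamma(R) = \min\{r \in \mathbb{N} : r \geq nR\}$ and, for $t \in [0, \tfrac{\gamma(R)-1}{n})$, $g(t;R) = \frac{R(n - \lceil nt \rceil)}{nR - \lceil nt \rceil}\,\mathbb{P}(\mathrm{Bin}(n,R) \leq \lceil nt \rceil)$, with $g(\tfrac{\gamma(R)-1}{n};R) = \max\{1, \frac{R(n-\gamma(R)+1)}{nR - \gamma(R)+1}\mathbb{P}(\mathrm{Bin}(n,R) \leq \gamma(R)-1)\}$. Then $g(\cdot; R)$ is non-decreasing on $[0, \tfrac{\gamma(R)-1}{n}]$; moreover, if $t_1 < t_2$ with $\lceil n t_2 \rceil = \lceil n t_1 \rceil + 1$ and $t_2 \le \tfrac{\gamma(R)-1}{n}$, then $g(t_1;R) < g(t_2;R)$. -/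
open MeasureTheory ProbabilityTheory Finset

/-- CDF of a Binomial(n,R) at k: P(Bin(n,R) ≤ k). -/
noncomputable def binCDF (n k : ℕ) (R : ℝ) : ℝ :=
  ∑ j ∈ Finset.range (k + 1), (n.choose j : ℝ) * R ^ j * (1 - R) ^ (n - j)

/-- Upper tail of a Binomial(n,p) at t: P(Bin(n,p) ≥ t). -/
noncomputable def binTail (n t : ℕ) (p : ℝ) : ℝ :=
  ∑ j ∈ Finset.Icc t n, (n.choose j : ℝ) * p ^ j * (1 - p) ^ (n - j)

/-- γ(R) = min {r ∈ ℕ : r ≥ n R}. -/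
noncomputable def gam (n : ℕ) (R : ℝ) : ℕ := sInf {r : ℕ | (n : ℝ) * R ≤ r}

/-- The function g(t; R) from the paper. -/
noncomputable def g (n : ℕ) (R t : ℝ) : ℝ :=
  if t = ((gam n R : ℝ) - 1) / n then
    max 1 (R * ((n : ℝ) - ((gam n R : ℝ) - 1)) / ((n : ℝ) * R - ((gam n R : ℝ) - 1)) *
      binCDF n (gam n R - 1) R)
  else
    R * ((n : ℝ) - (⌈(n : ℝ) * t⌉ : ℝ)) / ((n : ℝ) * R - (⌈(n : ℝ) * t⌉ : ℝ)) *
      binCDF n (⌈(n : ℝ) * t⌉).toNat R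

/-!
Write `k = ⌈n t⌉`. Away from the right endpoint, `g(t; R)` is `c(k) · P(Bin(n, R) ≤ k)` with
`c(x) = R (n - x) / (n R - x) = R + n R (1 - R) / (n R - x)`. For `k < n R` both factors are
positive and strictly increasing in `k`, so `g` increases strictly each time `⌈n t⌉` jumps and is
constant in between. At the endpoint, `k = γ(R) - 1 < n R` is the largest value of `⌈n t⌉`, and
taking the maximum with `1` can only increase the value.
-/

noncomputable def gCoeff (n : ℕ) (R x : ℝ) : ℝ :=
  R * ((n : ℝ) - x) / ((n : ℝ) * R - x)

noncomputable def gOfCeil (n : ℕ) (R : ℝ) (k : ℕ) : ℝ :=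
  gCoeff n R k * binCDF n k R

lemma binCDF_pos (n k : ℕ) {R : ℝ} (hR₀ : 0 ≤ R) (hR₁ : R < 1) : 0 < binCDF n k R := by
  have h1R : 0 < 1 - R := by linarith
  refine Finset.sum_pos' (fun j _ => by positivity) ⟨0, by simp, ?_⟩
  simpa using pow_pos h1R n

lemma binCDF_lt_binCDF_succ {n k : ℕ} {R : ℝ} (hR₀ : 0 < R) (hR₁ : R < 1) (hk : k + 1 ≤ n) :
    binCDF n k R < binCDF n (k + 1) R := by
  have h1R : 0 < 1 - R := by linarith
  have hchoose : (0 : ℝ) < n.choose (k + 1) := by exact_mod_cast Nat.choose_pos hk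
  unfold binCDF
  rw [Finset.sum_range_succ _ (k + 1)]
  exact lt_add_of_pos_right _ (by positivity)

lemma gCoeff_pos {n : ℕ} {R x : ℝ} (hR₀ : 0 < R) (hR₁ : R < 1) (hx : x < n * R) :
    0 < gCoeff n R x := by
  have hnR : (n : ℝ) * R ≤ n := mul_le_of_le_one_right n.cast_nonneg hR₁.le
  exact div_pos (mul_pos hR₀ (by linarith)) (by linarith)

lemma gCoeff_lt_gCoeff {n : ℕ} {R x y : ℝ} (hR₀ : 0 < R) (hR₁ : R < 1) (hx : 0 ≤ x)
    (hxy : x < y) (hy : y < n * R) : gCoeff n R x < gCoeff n R y := by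
  have hn : (0 : ℝ) < n := pos_of_mul_pos_left (hx.trans_lt (hxy.trans hy)) hR₀.le
  unfold gCoeff
  rw [div_lt_div_iff₀ (by linarith) (by linarith)]
  -- the cross-multiplied difference is `R · n (1 - R) (y - x)`
  have key : 0 < R * (n * (1 - R) * (y - x)) :=
    mul_pos hR₀ (mul_pos (mul_pos hn (by linarith)) (by linarith))
  linarith

lemma gOfCeil_lt_succ {n : ℕ} {R : ℝ} (hR₀ : 0 < R) (hR₁ : R < 1) {k : ℕ}
    (hk : (k : ℝ) + 1 < n * R) : gOfCeil n R k < gOfCeil n R (k + 1) := by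
  have hkn : k + 1 ≤ n := by
    have : (n : ℝ) * R ≤ n := mul_le_of_le_one_right n.cast_nonneg hR₁.le
    exact_mod_cast (by linarith : (k : ℝ) + 1 ≤ n)
  unfold gOfCeil
  push_cast
  exact mul_lt_mul'' (gCoeff_lt_gCoeff hR₀ hR₁ k.cast_nonneg (lt_add_one _) hk)
    (binCDF_lt_binCDF_succ hR₀ hR₁ hkn) (gCoeff_pos hR₀ hR₁ (by linarith)).le
    (binCDF_pos n k hR₀.le hR₁).le

lemma gOfCeil_strictMonoOn {n : ℕ} {R : ℝ} (hR₀ : 0 < R) (hR₁ : R < 1) {K : ℕ}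
    (hK : (K : ℝ) < n * R) : StrictMonoOn (gOfCeil n R) (Set.Iic K) :=
  strictMonoOn_Iic_of_lt_succ fun m hm => by
    rw [Order.succ_eq_add_one]
    have : (m : ℝ) + 1 ≤ K := by exact_mod_cast hm
    exact gOfCeil_lt_succ hR₀ hR₁ (by linarith)

lemma gam_eq_ceil (n : ℕ) (R : ℝ) : gam n R = ⌈(n : ℝ) * R⌉₊ :=
  le_antisymm (Nat.sInf_le (Nat.le_ceil ((n : ℝ) * R)))
    (le_csInf ⟨_, Nat.le_ceil ((n : ℝ) * R)⟩ fun _ hr => Nat.ceil_le.mpr hr)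

lemma g_eq_gOfCeil {n : ℕ} {R t : ℝ} (ht₀ : 0 ≤ t)
    (ht : t ≠ ((gam n R : ℝ) - 1) / n) : g n R t = gOfCeil n R ⌈(n : ℝ) * t⌉₊ := by
  have hnt : 0 ≤ (n : ℝ) * t := by positivity
  rw [g, if_neg ht, gOfCeil, gCoeff, Int.ceil_toNat, natCast_ceil_eq_intCast_ceil hnt]

lemma cast_gam_sub_one {n : ℕ} {R : ℝ} (hnR : 0 < (n : ℝ) * R) :
    ((gam n R - 1 : ℕ) : ℝ) = (gam n R : ℝ) - 1 := by
  have hγ : 1 ≤ gam n R := by rw [gam_eq_ceil]; exact Nat.one_le_ceil_iff.mpr hnR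
  push_cast [hγ]
  ring

lemma cast_gam_sub_one_lt {n : ℕ} {R : ℝ} (hnR : 0 < (n : ℝ) * R) :
    ((gam n R - 1 : ℕ) : ℝ) < n * R := by
  have := Nat.ceil_lt_add_one hnR.le
  rw [← gam_eq_ceil] at this
  rw [cast_gam_sub_one hnR]
  linarith

lemma ceil_le_gam_sub_one {n : ℕ} {R t : ℝ} (hn : 0 < n) (hnR : 0 < (n : ℝ) * R)
    (ht : t ≤ ((gam n R : ℝ) - 1) / n) : ⌈(n : ℝ) * t⌉₊ ≤ gam n R - 1 := by
  rw [Nat.ceil_le, cast_gam_sub_one hnR, ← le_div_iff₀' (by positivity)]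
  exact ht

lemma gOfCeil_le_g {n : ℕ} {R t : ℝ} (hn : 0 < n) (hnR : 0 < (n : ℝ) * R) (ht₀ : 0 ≤ t) :
    gOfCeil n R ⌈(n : ℝ) * t⌉₊ ≤ g n R t := by
  by_cases ht : t = ((gam n R : ℝ) - 1) / n
  · have hceil : ⌈(n : ℝ) * t⌉₊ = gam n R - 1 := by
      rw [ht, mul_div_cancel₀ _ (by positivity), ← cast_gam_sub_one hnR, Nat.ceil_natCast]
    rw [hceil, g, if_pos ht, gOfCeil, gCoeff, cast_gam_sub_one hnR]
    exact le_max_right _ _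
  · exact (g_eq_gOfCeil ht₀ ht).ge

theorem stmt_4 (n : ℕ) (hn : 0 < n) (R : ℝ) (hR : R ∈ Set.Ioo (0 : ℝ) 1) :
    MonotoneOn (g n R) (Set.Icc 0 (((gam n R : ℝ) - 1) / n)) ∧
    ∀ t1 t2 : ℝ, t1 ∈ Set.Icc (0 : ℝ) (((gam n R : ℝ) - 1) / n) →
      t2 ∈ Set.Icc (0 : ℝ) (((gam n R : ℝ) - 1) / n) → t1 < t2 →
      ⌈(n : ℝ) * t2⌉ = ⌈(n : ℝ) * t1⌉ + 1 → g n R t1 < g n R t2 := by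
  obtain ⟨hR₀, hR₁⟩ := hR
  have hnR : 0 < (n : ℝ) * R := mul_pos (by exact_mod_cast hn) hR₀
  set e := ((gam n R : ℝ) - 1) / n
  have hmono := gOfCeil_strictMonoOn hR₀ hR₁ (cast_gam_sub_one_lt hnR)
  have hceil_le (t : ℝ) (ht : t ∈ Set.Icc 0 e) : ⌈(n : ℝ) * t⌉₊ ∈ Set.Iic (gam n R - 1) :=
    ceil_le_gam_sub_one hn hnR ht.2
  -- only the right endpoint is special, and it is never the smaller of two points
  have hg_left (t1 t2 : ℝ) (h1 : t1 ∈ Set.Icc 0 e) (h12 : t1 < t2) (h2 : t2 ≤ e) :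
      g n R t1 = gOfCeil n R ⌈(n : ℝ) * t1⌉₊ :=
    g_eq_gOfCeil h1.1 (h12.trans_le h2).ne
  refine ⟨fun t1 h1 t2 h2 h12 => ?_, fun t1 t2 h1 h2 h12 hceil => ?_⟩
  · rcases h12.eq_or_lt with rfl | h12
    · rfl
    rw [hg_left t1 t2 h1 h12 h2.2]
    exact (hmono.monotoneOn (hceil_le t1 h1) (hceil_le t2 h2)
      (Nat.ceil_mono (by gcongr))).trans (gOfCeil_le_g hn hnR h2.1)
  · rw [hg_left t1 t2 h1 h12 h2.2]
    refine (hmono (hceil_le t1 h1) (hceil_le t2 h2) ?_).trans_le (gOfCeil_le_g hn hnR h2.1)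
    have := Int.natCast_ceil_eq_ceil (mul_nonneg (Nat.cast_nonneg n) h1.1)
    have := Int.natCast_ceil_eq_ceil (mul_nonneg (Nat.cast_nonneg n) h2.1)
    omega
end

section
/- Assume the lower-tail PRW inequality as a hypothesis (for i.i.d. $L_i \in [0,1]$ with mean $R \in (0,1)$ and integer $k \in [0, nR)$: $\mathbb{P}(\sum_i L_i \leq k) \leq \frac{R(n-k)}{nR-k}\mathbb{P}(\mathrm{Bin}(n,R) \leq k)$). Let $\alpha \in (0,1)$ and define the statistic $P = g\big(\min\{\hat R, \tfrac{\gamma(\alpha)-1}{n}\}; \alpha\big)$ where $\hat R = \tfrac1n \sum_i L_i$. Then $P$ is a valid p-value for $H_0: R > \alpha$, i.e., whenever $R > \alpha$, for every $\delta \in (0,1)$, $\mathbb{P}(P \leq \delta) \leq \delta$. -/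
open MeasureTheory ProbabilityTheory Finset

/-! On the event `P ≤ δ` the minimum in `P` is below the cap `(γ(α) - 1)/n`, since `g ≥ 1 > δ`
there; so `P = g(⌈S⌉/n; α)` with `S = ∑ Lᵢ`, and almost surely `S ≤ k*`, where `k* < nα` is the
largest integer with `g(k*/n; α) ≤ δ` (this is `n g⁻¹(δ; α)`). As `k* < nα < nR`, the PRW
inequality bounds `P(S ≤ k*)` by its right-hand side at `R`. Both factors of that bound decrease in
`R` on `[α, 1]`: the binomial CDF because the Bernstein sum defining it telescopes under
differentiation to `-n` times a single Bernstein polynomial. So the bound is at most its value at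
`α`, which is `g(k*/n; α) ≤ δ`. -/

open Polynomial in
theorem derivative_sum_range_bernsteinPolynomial (R : Type*) [CommRing R] (n k : ℕ) :
    derivative (∑ ν ∈ range (k + 1), bernsteinPolynomial R n ν) =
      -n * bernsteinPolynomial R (n - 1) k := by
  induction k with
  | zero => simp [bernsteinPolynomial.derivative_zero]
  | succ k ih =>
    rw [sum_range_succ, derivative_add, ih, bernsteinPolynomial.derivative_succ]
    ring

theorem binCDF_eq_eval_sum_bernsteinPolynomial (n k : ℕ) (p : ℝ) :
    binCDF n k p = (∑ ν ∈ range (k + 1), bernsteinPolynomial ℝ n ν).eval p := by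
  simp [binCDF, bernsteinPolynomial, Polynomial.eval_finsetSum]

theorem binCDF_nonneg (n k : ℕ) {p : ℝ} (hp₀ : 0 ≤ p) (hp₁ : p ≤ 1) : 0 ≤ binCDF n k p :=
  sum_nonneg fun j _ => by have hp₁' := sub_nonneg.2 hp₁; positivity

theorem binCDF_antitoneOn (n k : ℕ) : AntitoneOn (binCDF n k) (Set.Icc 0 1) := by
  simp only [funext (binCDF_eq_eval_sum_bernsteinPolynomial n k)]
  refine antitoneOn_of_deriv_nonpos (convex_Icc 0 1) (Polynomial.continuousOn _)
    (Polynomial.differentiableOn _) fun x hx => ?_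
  rw [interior_Icc] at hx
  have hx₀ : 0 ≤ x := hx.1.le
  have hx₁ : 0 ≤ 1 - x := sub_nonneg.2 hx.2.le
  rw [Polynomial.deriv, derivative_sum_range_bernsteinPolynomial]
  simp only [bernsteinPolynomial, Polynomial.eval_mul, Polynomial.eval_neg,
    Polynomial.eval_natCast, Polynomial.eval_pow, Polynomial.eval_sub, Polynomial.eval_one,
    Polynomial.eval_X, neg_mul, neg_nonpos]
  positivity

theorem gam_eq_natCeil (n : ℕ) (R : ℝ) : gam n R = ⌈n * R⌉₊ := by
  simp only [gam, ← Nat.ceil_le]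
  exact csInf_Ici

/-- The right-hand side of the lower-tail PRW inequality. -/
noncomputable def prwBound (n k : ℕ) (R : ℝ) : ℝ :=
  R * ((n : ℝ) - k) / ((n : ℝ) * R - k) * binCDF n k R

theorem prwBound_le_prwBound {n k : ℕ} {α R : ℝ} (hk : (k : ℝ) < n * α) (hα : 0 ≤ α)
    (hαR : α ≤ R) (hR : R ≤ 1) : prwBound n k R ≤ prwBound n k α := by
  have hkn : (k : ℝ) ≤ n := hk.le.trans (mul_le_of_le_one_right n.cast_nonneg (hαR.trans hR))
  have hα' : 0 < (n : ℝ) * α - k := sub_pos.2 hk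
  have hR' : 0 < (n : ℝ) * R - k := by nlinarith [n.cast_nonneg (α := ℝ)]
  have hfactor :
      R * ((n : ℝ) - k) / ((n : ℝ) * R - k) ≤ α * ((n : ℝ) - k) / ((n : ℝ) * α - k) := by
    rw [div_le_div_iff₀ hR' hα']
    nlinarith [mul_nonneg (mul_nonneg (sub_nonneg.2 hkn) k.cast_nonneg) (sub_nonneg.2 hαR)]
  exact mul_le_mul hfactor
    (binCDF_antitoneOn n k ⟨hα, hαR.trans hR⟩ ⟨hα.trans hαR, hR⟩ hαR)
    (binCDF_nonneg n k (hα.trans hαR) hR)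
    (div_nonneg (mul_nonneg hα (sub_nonneg.2 hkn)) hα'.le)

theorem g_eq_prwBound {n : ℕ} {R t : ℝ} (ht : 0 ≤ t) (hne : t ≠ ((gam n R : ℝ) - 1) / n) :
    g n R t = prwBound n ⌈n * t⌉₊ R := by
  have hnt : 0 ≤ (n : ℝ) * t := by positivity
  rw [g, if_neg hne, prwBound, Int.ceil_toNat, natCast_ceil_eq_intCast_ceil hnt]

theorem one_le_g_gam_sub_one_div (n : ℕ) (R : ℝ) : 1 ≤ g n R (((gam n R : ℝ) - 1) / n) := by
  rw [g, if_pos rfl]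
  exact le_max_left _ _

theorem exists_le_of_g_le {n : ℕ} {α δ S : ℝ} (hn : 0 < n) (hS : 0 ≤ S) (hδ : δ < 1)
    (hg : g n α (min ((1 / n : ℝ) * S) (((gam n α : ℝ) - 1) / n)) ≤ δ) :
    ∃ k < gam n α, S ≤ k ∧ prwBound n k α ≤ δ := by
  by_cases hlt : (1 / n : ℝ) * S < ((gam n α : ℝ) - 1) / n
  · rw [min_eq_left hlt.le, g_eq_prwBound (by positivity) hlt.ne] at hg
    have hnS : (n : ℝ) * ((1 / n) * S) = S := by field_simp
    rw [hnS] at hg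
    have hSγ : S < (gam n α : ℝ) - 1 := by
      rwa [one_div_mul_eq_div, div_lt_div_iff_of_pos_right (by positivity)] at hlt
    refine ⟨⌈S⌉₊, ?_, Nat.le_ceil S, hg⟩
    exact_mod_cast (Nat.ceil_lt_add_one hS).trans (by linarith : S + 1 < gam n α)
  · rw [min_eq_right (not_lt.1 hlt)] at hg
    linarith [one_le_g_gam_sub_one_div n α]

theorem toReal_measure_le_of_ae_exists_le {Ω : Type*} [MeasurableSpace Ω] {μ : Measure Ω}
    [IsFiniteMeasure μ] {E : Set Ω} {f : Ω → ℝ} {K : Finset ℕ} {δ : ℝ} (hδ : 0 ≤ δ)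
    (hE : ∀ᵐ ω ∂μ, ω ∈ E → ∃ k ∈ K, f ω ≤ k)
    (hK : ∀ k ∈ K, (μ {ω | f ω ≤ k}).toReal ≤ δ) :
    (μ E).toReal ≤ δ := by
  rcases K.eq_empty_or_nonempty with rfl | hK₀
  · have hE₀ : μ E = 0 := measure_eq_zero_iff_ae_notMem.2 (by simpa using hE)
    simp [hE₀, hδ]
  · have hsub : E ≤ᵐ[μ] {ω | f ω ≤ K.max' hK₀} := by
      filter_upwards [hE] with ω h hω
      obtain ⟨k, hk, hfk⟩ := h hω
      exact hfk.trans (mod_cast K.le_max' k hk)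
    exact (ENNReal.toReal_mono (measure_ne_top _ _) (measure_mono_ae hsub)).trans
      (hK _ (K.max'_mem hK₀))

theorem stmt_14_general {Ω : Type*} [MeasurableSpace Ω] (μ : Measure Ω) [IsProbabilityMeasure μ]
    (n : ℕ) (hn : 0 < n) (L : Fin n → Ω → ℝ) (R α : ℝ)
    (hbdd : ∀ i, ∀ᵐ ω ∂μ, L i ω ∈ Set.Icc (0 : ℝ) 1)
    (hR1 : R < 1)
    (hα : α ∈ Set.Ioo (0 : ℝ) 1)
    (hPRW : ∀ k : ℕ, (k : ℝ) < n * R →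
      (μ {ω | ∑ i, L i ω ≤ (k : ℝ)}).toReal ≤
        R * ((n : ℝ) - k) / ((n : ℝ) * R - k) * binCDF n k R)
    (hH0 : α < R) (δ : ℝ) (hδ : δ ∈ Set.Ioo (0 : ℝ) 1) :
    (μ {ω | g n α (min ((1 / n : ℝ) * ∑ i, L i ω) (((gam n α : ℝ) - 1) / n)) ≤ δ}).toReal
      ≤ δ := by
  refine toReal_measure_le_of_ae_exists_le (f := fun ω => ∑ i, L i ω)
    (K := (range (gam n α)).filter (fun k => prwBound n k α ≤ δ)) hδ.1.le ?_ fun k hk => ?_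
  · filter_upwards [ae_all_iff.2 hbdd] with ω hω hg
    obtain ⟨k, hkγ, hSk, hkδ⟩ :=
      exists_le_of_g_le hn (sum_nonneg fun i _ => (hω i).1) hδ.2 hg
    exact ⟨k, mem_filter.2 ⟨mem_range.2 hkγ, hkδ⟩, hSk⟩
  · obtain ⟨hkγ, hkδ⟩ := mem_filter.1 hk
    have hkα : (k : ℝ) < n * α := by
      rwa [mem_range, gam_eq_natCeil, Nat.lt_ceil] at hkγ
    calc (μ {ω | ∑ i, L i ω ≤ (k : ℝ)}).toReal
        ≤ prwBound n k R := hPRW k (hkα.trans_le (by gcongr))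
      _ ≤ prwBound n k α := prwBound_le_prwBound hkα hα.1.le hH0.le hR1.le
      _ ≤ δ := hkδ

theorem stmt_14 {Ω : Type*} [MeasurableSpace Ω] (μ : Measure Ω) [IsProbabilityMeasure μ]
    (n : ℕ) (hn : 0 < n) (L : Fin n → Ω → ℝ) (R α : ℝ)
    (hmeas : ∀ i, Measurable (L i))
    (hindep : iIndepFun L μ)
    (hident : ∀ i j, IdentDistrib (L i) (L j) μ μ)
    (hbdd : ∀ i, ∀ᵐ ω ∂μ, L i ω ∈ Set.Icc (0 : ℝ) 1)
    (hmean : ∀ i, ∫ ω, L i ω ∂μ = R) (hR0 : 0 < R) (hR1 : R < 1)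
    (hα : α ∈ Set.Ioo (0 : ℝ) 1)
    (hPRW : ∀ k : ℕ, (k : ℝ) < n * R →
      (μ {ω | ∑ i, L i ω ≤ (k : ℝ)}).toReal ≤
        R * ((n : ℝ) - k) / ((n : ℝ) * R - k) * binCDF n k R)
    (hH0 : α < R) (δ : ℝ) (hδ : δ ∈ Set.Ioo (0 : ℝ) 1) :
    (μ {ω | g n α (min ((1 / n : ℝ) * ∑ i, L i ω) (((gam n α : ℝ) - 1) / n)) ≤ δ}).toReal
      ≤ δ :=
  stmt_14_general μ n hn L R α hbdd hR1 hα hPRW hH0 δ hδ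
end
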